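/- Let m_1, ..., m_r be positive pairwise coprime natural numbers, u_1, ..., u_r integers, and suppose for all indices i < j there are integers c_{ij} with c_{ij}·m_i ≡ 1 (mod m_j). Define v_1, ..., v_r recursively by v_i = (((u_i − v_1)·c_{1i} − v_2)·c_{2i} − ... − v_{i−1})·c_{(i−1)i} mod m_i (i.e., starting from u_i, successively subtract v_j and multiply by c_{ji} for j = 1, ..., i−1, then reduce mod m_i). Then the integer u = v_r·m_{r−1}···m_2·m_1 + ... + v_3·m_2·m_1 + v_2·m_1 + v_1, i.e., u = ∑_i v_i·(m_1···m_{i−1}), satisfies 0 ≤ u < m_1···m_r and u ≡ u_i (mod m_i) for all i. This is Garner's algorithm for the Chinese Remainder Theorem. -/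

import Mathlib

/-!
Running the fold for `v i`, each step `acc ↦ (acc - v j) * c j i` is undone modulo `m i` by
multiplying with `m j`, so the final accumulator times `m 0 ⋯ m (i-1)` is congruent to
`u i - ∑_{k<i} v k · m 0 ⋯ m (k-1)` modulo `m i`. Reducing the accumulator modulo `m i` to get
`v i` keeps this congruence, and all terms of the sum with index above `i` are multiples of `m i`.
The bound `0 ≤ u < ∏ m i` is the mixed-radix estimate for digits `0 ≤ v i < m i`.
-/

open Finset

section MixedRadix

variable {ι : Type*} [LinearOrder ι]

theorem sum_mul_prod_filter_lt_lt_prod (s : Finset ι) (a w : ι → ℤ)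
    (hw₀ : ∀ i ∈ s, 0 ≤ w i) (hwa : ∀ i ∈ s, w i < a i) :
    ∑ i ∈ s, w i * ∏ j ∈ s with j < i, a j < ∏ j ∈ s, a j := by
  induction s using Finset.induction_on_max with
  | empty => simp
  | insert k s hk ih =>
    have hks : k ∉ s := fun h => (hk k h).false
    have hlow : ∑ i ∈ s, w i * ∏ j ∈ insert k s with j < i, a j =
        ∑ i ∈ s, w i * ∏ j ∈ s with j < i, a j :=
      sum_congr rfl fun i hi => by rw [filter_insert, if_neg (hk i hi).not_gt]
    have htop : ({j ∈ insert k s | j < k} : Finset ι) = s := by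
      rw [filter_insert, if_neg (lt_irrefl k), filter_true_of_mem hk]
    have hP : 0 ≤ ∏ j ∈ s, a j :=
      prod_nonneg fun j hj =>
        (hw₀ j (mem_insert_of_mem hj)).trans (hwa j (mem_insert_of_mem hj)).le
    have hT := ih (fun i hi => hw₀ i (mem_insert_of_mem hi))
      fun i hi => hwa i (mem_insert_of_mem hi)
    have hwk : w k + 1 ≤ a k := hwa k (mem_insert_self k s)
    rw [sum_insert hks, prod_insert hks, hlow, htop]
    nlinarith

theorem List.foldr_horner_eq_sum (v m : ι → ℤ) :
    ∀ {L : List ι}, L.Pairwise (· < ·) →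
      L.foldr (fun j acc => v j + m j * acc) 0 =
        ∑ k ∈ L.toFinset, v k * ∏ j ∈ L.toFinset with j < k, m j
  | [], _ => by simp
  | j :: L, hL => by
    obtain ⟨hj, hL⟩ := List.pairwise_cons.1 hL
    have hjL : j ∉ L.toFinset := fun h => lt_irrefl j (hj j (List.mem_toFinset.1 h))
    have hbot : ({k ∈ insert j L.toFinset | k < j} : Finset ι) = ∅ := by
      rw [filter_insert, if_neg (lt_irrefl j), filter_eq_empty_iff]
      exact fun k hk => (hj k (List.mem_toFinset.1 hk)).not_gt
    have hhigh : ∀ k ∈ L.toFinset, ∏ i ∈ insert j L.toFinset with i < k, m i =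
        m j * ∏ i ∈ L.toFinset with i < k, m i := fun k hk => by
      rw [filter_insert, if_pos (hj k (List.mem_toFinset.1 hk)),
        prod_insert fun h => hjL (mem_filter.1 h).1]
    rw [List.foldr_cons, List.toFinset_cons, sum_insert hjL, hbot, prod_empty, mul_one,
      sum_congr rfl fun k hk => by rw [hhigh k hk], List.foldr_horner_eq_sum v m hL, mul_sum]
    simp only [mul_left_comm]

end MixedRadix

theorem List.foldl_sub_mul_mul_prod_modEq {ι : Type*} (n : ℤ) (v m c : ι → ℤ) :
    ∀ (L : List ι), (∀ j ∈ L, c j * m j ≡ 1 [ZMOD n]) → ∀ a : ℤ,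
      L.foldl (fun acc j => (acc - v j) * c j) a * (L.map m).prod ≡
        a - L.foldr (fun j acc => v j + m j * acc) 0 [ZMOD n]
  | [], _, a => by simp [Int.ModEq.refl]
  | j :: L, hc, a => by
    have ih := List.foldl_sub_mul_mul_prod_modEq n v m c L
      (fun k hk => hc k (List.mem_cons_of_mem j hk)) ((a - v j) * c j)
    set H := L.foldr (fun j acc => v j + m j * acc) 0
    calc L.foldl (fun acc j => (acc - v j) * c j) ((a - v j) * c j) * (m j * (L.map m).prod)
        = L.foldl (fun acc j => (acc - v j) * c j) ((a - v j) * c j) * (L.map m).prod * m j := by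
          ring
      _ ≡ ((a - v j) * c j - H) * m j [ZMOD n] := ih.mul_right _
      _ = (a - v j) * (c j * m j) - m j * H := by ring
      _ ≡ (a - v j) * 1 - m j * H [ZMOD n] :=
          ((hc j List.mem_cons_self).mul_left _).sub_right _
      _ = a - (v j + m j * H) := by ring

theorem sum_mul_prod_Iio_modEq_sum_Iic {ι : Type*} [LinearOrder ι] [Fintype ι]
    [LocallyFiniteOrderBot ι] (v m : ι → ℤ) (i : ι) :
    ∑ k, v k * ∏ j ∈ Iio k, m j ≡ ∑ k ∈ Iic i, v k * ∏ j ∈ Iio k, m j [ZMOD m i] := by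
  have htail : ∑ k ∈ univ with ¬k ≤ i, v k * ∏ j ∈ Iio k, m j ≡ 0 [ZMOD m i] :=
    Int.modEq_zero_iff_dvd.2 <| dvd_sum fun k hk =>
      (dvd_prod_of_mem m (mem_Iio.2 (not_le.1 (mem_filter.1 hk).2))).mul_left _
  rw [← sum_filter_add_sum_filter_not univ (· ≤ i), filter_ge_eq_Iic]
  simpa only [add_zero] using htail.add_left _

theorem garner_foldl_mul_prod_modEq {r : ℕ} (m : Fin r → ℤ) (c : Fin r → Fin r → ℤ)
    (v : Fin r → ℤ) (i : Fin r) (hc : ∀ j < i, c j i * m j ≡ 1 [ZMOD m i]) (a : ℤ) :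
    ((List.finRange r).filter (fun j => j < i)).foldl (fun acc j => (acc - v j) * c j i) a *
        ∏ j ∈ Iio i, m j ≡ a - ∑ k ∈ Iio i, v k * ∏ j ∈ Iio k, m j [ZMOD m i] := by
  set L := (List.finRange r).filter (fun j => j < i)
  have hL : L.Pairwise (· < ·) := (List.pairwise_lt_finRange r).filter _
  have hLi : L.toFinset = Iio i := by
    rw [List.toFinset_filter, List.toFinset_finRange]
    simp only [decide_eq_true_eq, filter_gt_eq_Iio]
  have hIio : ∀ k ∈ Iio i, ({j ∈ Iio i | j < k} : Finset (Fin r)) = Iio k := fun k hk => by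
    ext j
    simpa only [mem_filter, mem_Iio, and_iff_right_iff_imp] using fun hj => hj.trans (mem_Iio.1 hk)
  have key := L.foldl_sub_mul_mul_prod_modEq (m i) v m (fun j => c j i)
    (fun j hj => hc j (by simpa [L] using hj)) a
  rwa [← List.prod_toFinset _ hL.nodup, List.foldr_horner_eq_sum v m hL, hLi,
    sum_congr rfl fun k hk => by rw [hIio k hk]] at key

theorem garner_algorithm_general (r : ℕ) (m : Fin r → ℕ) (hm : ∀ i, 0 < m i)
    (u : Fin r → ℤ) (c : Fin r → Fin r → ℤ)
    (hc : ∀ i j : Fin r, i < j → (m j : ℤ) ∣ (c i j * (m i : ℤ) - 1))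
    (v : Fin r → ℤ)
    (hv : ∀ i : Fin r,
      v i = (((List.finRange r).filter (fun j => j < i)).foldl
              (fun acc j => (acc - v j) * c j i) (u i)) % (m i : ℤ)) :
    0 ≤ ∑ i, v i * ∏ j ∈ Finset.Iio i, (m j : ℤ) ∧
      (∑ i, v i * ∏ j ∈ Finset.Iio i, (m j : ℤ)) < ∏ i, (m i : ℤ) ∧
      ∀ i : Fin r, (m i : ℤ) ∣ ((∑ i, v i * ∏ j ∈ Finset.Iio i, (m j : ℤ)) - u i) := by
  have hm' : ∀ i, (0 : ℤ) < m i := fun i => by exact_mod_cast hm i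
  have hv_nonneg : ∀ i, 0 ≤ v i := fun i => hv i ▸ Int.emod_nonneg _ (hm' i).ne'
  have hv_lt : ∀ i, v i < m i := fun i => hv i ▸ Int.emod_lt_of_pos _ (hm' i)
  refine ⟨sum_nonneg fun i _ => mul_nonneg (hv_nonneg i) (prod_nonneg fun j _ => (hm' j).le),
    ?_, fun i => Int.ModEq.dvd ?_⟩
  · simpa only [filter_gt_eq_Iio] using
      sum_mul_prod_filter_lt_lt_prod univ (fun i => (m i : ℤ)) v (fun i _ => hv_nonneg i)
        fun i _ => hv_lt i
  · set P : Fin r → ℤ := fun k => ∏ j ∈ Iio k, (m j : ℤ)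
    set H := ∑ k ∈ Iio i, v k * P k
    have hfold := garner_foldl_mul_prod_modEq (fun k => (m k : ℤ)) c v i
      (fun j hj => (Int.modEq_iff_dvd.2 (hc j i hj)).symm) (u i)
    have hvF : v i ≡ _ [ZMOD m i] := hv i ▸ Int.mod_modEq _ _
    calc u i = H + (u i - H) := by ring
      _ ≡ H + _ * P i [ZMOD m i] := hfold.symm.add_left H
      _ ≡ H + v i * P i [ZMOD m i] := (hvF.symm.mul_right _).add_left H
      _ = ∑ k ∈ Iic i, v k * P k := by rw [← sum_Iio_add_eq_sum_Iic, add_comm]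
      _ ≡ ∑ k, v k * P k [ZMOD m i] := (sum_mul_prod_Iio_modEq_sum_Iic v _ i).symm

theorem garner_algorithm (r : ℕ) (m : Fin r → ℕ) (hm : ∀ i, 0 < m i)
    (hcop : ∀ i j : Fin r, i ≠ j → Nat.Coprime (m i) (m j))
    (u : Fin r → ℤ) (c : Fin r → Fin r → ℤ)
    (hc : ∀ i j : Fin r, i < j → (m j : ℤ) ∣ (c i j * (m i : ℤ) - 1))
    (v : Fin r → ℤ)
    (hv : ∀ i : Fin r,
      v i = (((List.finRange r).filter (fun j => j < i)).foldl
              (fun acc j => (acc - v j) * c j i) (u i)) % (m i : ℤ)) :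
    0 ≤ ∑ i, v i * ∏ j ∈ Finset.Iio i, (m j : ℤ) ∧
      (∑ i, v i * ∏ j ∈ Finset.Iio i, (m j : ℤ)) < ∏ i, (m i : ℤ) ∧
      ∀ i : Fin r, (m i : ℤ) ∣ ((∑ i, v i * ∏ j ∈ Finset.Iio i, (m j : ℤ)) - u i) :=
  garner_algorithm_general r m hm u c hc v hv
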